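/- arXiv:1412.5534 — 5 statements merged into one kernel-verified Lean document; each statement's English description precedes it below -/
import Mathlib

section
/- Let T > 0, p ∈ [1,∞), and let {X(t)}_{t∈[0,T]} and {φ_t} be an evolving family of Banach spaces as in the context, with X₀ separable. If ũ : [0,T] → X₀ is strongly measurable, then the real-valued function t ↦ ‖φ_t(ũ(t))‖_{X(t)} is measurable on [0,T]; moreover, if ũ ∈ L^p(0,T;X₀) then ∫₀^T ‖φ_t(ũ(t))‖_{X(t)}^p dt ≤ C_X^p · ‖ũ‖_{L^p(0,T;X₀)}^p, so in particular t ↦ ‖φ_t(ũ(t))‖_{X(t)}^p is integrable. -/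
open MeasureTheory

/-- If `X₀` is separable and `ũ : [0,T] → X₀` is strongly measurable, then
`t ↦ ‖φ_t(ũ(t))‖_{X(t)}` is measurable on `[0,T]`; moreover if `ũ ∈ L^p(0,T;X₀)`
then `∫₀^T ‖φ_t(ũ(t))‖^p ≤ C_X^p ‖ũ‖_{L^p(0,T;X₀)}^p`, so in particular
`t ↦ ‖φ_t(ũ(t))‖^p` is integrable (appendix proof that `L^p_X` is well-defined). -/
theorem norm_pushforward_measurable_and_integrable
    (T : ℝ) (hT : 0 < T) (p : ℝ) (hp : 1 ≤ p)
    (X : ℝ → Type*) [∀ t, NormedAddCommGroup (X t)] [∀ t, NormedSpace ℝ (X t)]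
    [∀ t, CompleteSpace (X t)]
    [TopologicalSpace.SeparableSpace (X 0)]
    (φ : ∀ t : ℝ, X 0 ≃L[ℝ] X t)
    (hφ0 : φ 0 = ContinuousLinearEquiv.refl ℝ (X 0))
    (C : ℝ) (hC : 1 ≤ C)
    (hfwd : ∀ t ∈ Set.Icc (0:ℝ) T, ∀ v : X 0, ‖φ t v‖ ≤ C * ‖v‖)
    (hbwd : ∀ t ∈ Set.Icc (0:ℝ) T, ∀ w : X t, ‖(φ t).symm w‖ ≤ C * ‖w‖)
    (hmeas : ∀ v : X 0, Measurable fun t => ‖φ t v‖)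
    (ut : ℝ → X 0) (hsm : StronglyMeasurable ut) :
    Measurable (fun t : Set.Icc (0:ℝ) T => ‖φ (t : ℝ) (ut (t : ℝ))‖) ∧
    (IntegrableOn (fun t => ‖ut t‖ ^ p) (Set.Ioc 0 T) →
      IntegrableOn (fun t => ‖φ t (ut t)‖ ^ p) (Set.Ioc 0 T) ∧
      ∫ t in Set.Ioc 0 T, ‖φ t (ut t)‖ ^ p ≤
        C ^ p * ∫ t in Set.Ioc 0 T, ‖ut t‖ ^ p) := by
  letI : MeasurableSpace (X 0) := borel (X 0)
  haveI : BorelSpace (X 0) := ⟨rfl⟩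
  have humeas : Measurable ut := hsm.measurable
  -- the Carathéodory function `u x t = ‖φ t x‖`
  have hu_cont : ∀ t : ℝ, Continuous fun x : X 0 => ‖φ t x‖ :=
    fun t => (φ t).continuous.norm
  have hF : Measurable (Function.uncurry fun (x : X 0) (t : ℝ) => ‖φ t x‖) :=
    measurable_uncurry_of_continuous_of_measurable hu_cont hmeas
  have hmeasR : Measurable fun t : ℝ => ‖φ t (ut t)‖ := by
    have hpair : Measurable fun t : ℝ => (ut t, t) := humeas.prodMk measurable_id
    exact hF.comp hpair
  refine ⟨hmeasR.comp measurable_subtype_coe, fun hint => ?_⟩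
  have hp0 : (0:ℝ) ≤ p := le_trans zero_le_one hp
  have hC0 : (0:ℝ) ≤ C := le_trans zero_le_one hC
  have hbound : ∀ t ∈ Set.Ioc (0:ℝ) T, ‖φ t (ut t)‖ ^ p ≤ C ^ p * ‖ut t‖ ^ p := by
    intro t ht
    have h1 := hfwd t ⟨le_of_lt ht.1, ht.2⟩ (ut t)
    calc ‖φ t (ut t)‖ ^ p ≤ (C * ‖ut t‖) ^ p :=
          Real.rpow_le_rpow (norm_nonneg _) h1 hp0
      _ = C ^ p * ‖ut t‖ ^ p := Real.mul_rpow hC0 (norm_nonneg _)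
  have hmeas2 : Measurable fun t : ℝ => ‖φ t (ut t)‖ ^ p := (Real.continuous_rpow_const hp0).measurable.comp hmeasR
  have hintg : IntegrableOn (fun t => C ^ p * ‖ut t‖ ^ p) (Set.Ioc 0 T) :=
    hint.const_mul _
  have haebound : ∀ᵐ t ∂(volume.restrict (Set.Ioc (0:ℝ) T)),
      ‖‖φ t (ut t)‖ ^ p‖ ≤ C ^ p * ‖ut t‖ ^ p := by
    filter_upwards [ae_restrict_mem measurableSet_Ioc] with t ht
    rw [Real.norm_of_nonneg (Real.rpow_nonneg (norm_nonneg _) p)]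
    exact hbound t ht
  have hintf : IntegrableOn (fun t => ‖φ t (ut t)‖ ^ p) (Set.Ioc 0 T) :=
    Integrable.mono' hintg (hmeas2.aestronglyMeasurable.restrict) haebound
  refine ⟨hintf, ?_⟩
  calc ∫ t in Set.Ioc 0 T, ‖φ t (ut t)‖ ^ p
      ≤ ∫ t in Set.Ioc 0 T, C ^ p * ‖ut t‖ ^ p :=
        setIntegral_mono_on hintf hintg measurableSet_Ioc hbound
    _ = C ^ p * ∫ t in Set.Ioc 0 T, ‖ut t‖ ^ p := integral_const_mul _ _
end

section
/- Let T > 0 and let {X(t)}_{t∈[0,T]} and {φ_t} be an evolving family of Banach spaces as in the context, with X₀ separable. For each f in the continuous dual X₀*, the function t ↦ ‖(φ_t^{-1})^* f‖_{X(t)^*} is measurable on [0,T], where (φ_t^{-1})^* : X₀* → X(t)^* denotes the Banach-space adjoint (transpose) of φ_t^{-1} : X(t) → X₀. -/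
open MeasureTheory

/-!
The dual norm `‖f ∘ φ_t⁻¹‖` is the supremum of `‖f v‖ / ‖φ_t v‖` over `v ∈ X₀`, and by continuity
it suffices to take `v` in a countable dense subset of `X₀`. Each quotient is measurable in `t`,
and a countable supremum of measurable functions is measurable.
-/

namespace ContinuousLinearMap

variable {𝕜 E F : Type*} [NontriviallyNormedField 𝕜]
  [SeminormedAddCommGroup E] [NormedSpace 𝕜 E] [SeminormedAddCommGroup F] [NormedSpace 𝕜 F]

theorem isLUB_ratio_of_denseRange {ι : Type*} [Nonempty ι] {u : ι → E} (hu : DenseRange u)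
    (g : E →L[𝕜] F) : IsLUB (Set.range fun i => ‖g (u i)‖ / ‖u i‖) ‖g‖ := by
  refine ⟨?_, fun b hb => ?_⟩
  · rintro _ ⟨i, rfl⟩
    exact g.ratio_le_opNorm (u i)
  have hb_nonneg : 0 ≤ b :=
    (div_nonneg (norm_nonneg _) (norm_nonneg _)).trans (hb ⟨Classical.arbitrary ι, rfl⟩)
  refine g.opNorm_le_bound hb_nonneg fun x => hu.induction_on x ?_ fun i => ?_
  · exact isClosed_le g.continuous.norm (continuous_const.mul continuous_norm)
  rcases (norm_nonneg (u i)).eq_or_lt with hzero | hpos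
  · simpa [← hzero] using g.le_opNorm (u i)
  · exact (div_le_iff₀ hpos).1 (hb ⟨i, rfl⟩)

end ContinuousLinearMap

theorem dual_norm_measurable_general
    (T : ℝ)
    (X : ℝ → Type*) [∀ t, NormedAddCommGroup (X t)] [∀ t, NormedSpace ℝ (X t)]
    [TopologicalSpace.SeparableSpace (X 0)]
    (φ : ∀ t : ℝ, X 0 ≃L[ℝ] X t)
    (hmeas : ∀ v : X 0, Measurable fun t => ‖φ t v‖)
    (f : StrongDual ℝ (X 0)) :
    Measurable (fun t : Set.Icc (0:ℝ) T =>
      ‖f.comp ((φ (t : ℝ)).symm.toContinuousLinearMap)‖) := by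
  have : Nonempty (X 0) := ⟨0⟩
  set u := TopologicalSpace.denseSeq (X 0)
  have hdense : ∀ t, DenseRange fun n => φ t (u n) := fun t =>
    (φ t).surjective.denseRange.comp (TopologicalSpace.denseRange_denseSeq (X 0)) (φ t).continuous
  refine Measurable.isLUB (f := fun n (t : Set.Icc (0:ℝ) T) => ‖f (u n)‖ / ‖φ t (u n)‖)
    (fun n => measurable_const.div ((hmeas (u n)).comp measurable_subtype_coe)) fun t => ?_
  have := (f.comp (φ t).symm.toContinuousLinearMap).isLUB_ratio_of_denseRange (hdense t)
  simp only [ContinuousLinearMap.comp_apply, ContinuousLinearEquiv.coe_coe,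
    ContinuousLinearEquiv.symm_apply_apply] at this
  exact this

/-- For separable `X₀` and each `f ∈ X₀*`, the function
`t ↦ ‖(φ_t^{-1})^* f‖_{X(t)^*}` is measurable on `[0,T]`, where the adjoint
`(φ_t^{-1})^* : X₀* → X(t)^*` is given by composition: `(φ_t^{-1})^* f = f ∘ φ_t^{-1}`
(Remark 2.6 on the dual operator). -/
theorem dual_norm_measurable
    (T : ℝ) (hT : 0 < T)
    (X : ℝ → Type*) [∀ t, NormedAddCommGroup (X t)] [∀ t, NormedSpace ℝ (X t)]
    [∀ t, CompleteSpace (X t)]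
    [TopologicalSpace.SeparableSpace (X 0)]
    (φ : ∀ t : ℝ, X 0 ≃L[ℝ] X t)
    (hφ0 : φ 0 = ContinuousLinearEquiv.refl ℝ (X 0))
    (C : ℝ) (hC : 1 ≤ C)
    (hfwd : ∀ t ∈ Set.Icc (0:ℝ) T, ∀ v : X 0, ‖φ t v‖ ≤ C * ‖v‖)
    (hbwd : ∀ t ∈ Set.Icc (0:ℝ) T, ∀ w : X t, ‖(φ t).symm w‖ ≤ C * ‖w‖)
    (hmeas : ∀ v : X 0, Measurable fun t => ‖φ t v‖)
    (f : StrongDual ℝ (X 0)) :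
    Measurable (fun t : Set.Icc (0:ℝ) T =>
      ‖f.comp ((φ (t : ℝ)).symm.toContinuousLinearMap)‖) :=
  dual_norm_measurable_general T X φ hmeas f
end

section
/- Let T > 0, p ∈ (1,∞) with conjugate exponent q (1/p + 1/q = 1), and let {X(t)}_{t∈[0,T]} and {φ_t} be an evolving family of Banach spaces as in the context, with X₀ separable and each X(t) reflexive. Let g be a function with g(t) ∈ X(t)^* for each t such that t ↦ φ_t^*(g(t)) belongs to L^q(0,T;X₀*), where φ_t^* : X(t)^* → X₀* is the adjoint of φ_t. Then: (i) for every f with f(t) ∈ X(t) whose pullback t ↦ φ_t^{-1}(f(t)) lies in L^p(0,T;X₀), one has |∫₀^T ⟨g(t), f(t)⟩_{X(t)^*,X(t)} dt| ≤ (∫₀^T ‖g(t)‖_{X(t)^*}^q dt)^{1/q} · (∫₀^T ‖f(t)‖_{X(t)}^p dt)^{1/p}; and (ii) the supremum of ∫₀^T ⟨g(t), f(t)⟩_{X(t)^*,X(t)} dt over all such f with (∫₀^T ‖f(t)‖_{X(t)}^p dt)^{1/p} ≤ 1 equals (∫₀^T ‖g(t)‖_{X(t)^*}^q dt)^{1/q}.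 -/
/-!
Everything is pulled back to the fixed separable space `X₀`. A dense sequence `(vₙ)` in `X₀` makes
`t ↦ ‖g t‖` measurable (the dual norm is a countable supremum over the vectors `φ_t vₙ`), and
`t ↦ ‖f t‖ = ‖φ_t (φ_t⁻¹ (f t))‖` is a Carathéodory composition. The uniform bounds on `φ_t` and
`φ_t⁻¹` transfer the `L^p` and `L^q` integrability, after which (i) is the scalar Hölder inequality.
For (ii), fix `θ < 1` and select measurably, for each `t`, an index `n` with
`θ ‖g t‖ ‖φ_t vₙ‖ < g t (φ_t vₙ)`; scaling the normalised vectors by `‖g t‖ ^ (q - 1)`, the extremal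
profile of Hölder's inequality, gives admissible `f` with pairing at least `θ ‖g‖_{L^q}`.
-/

open MeasureTheory Filter Topology TopologicalSpace

namespace ContinuousLinearMap

variable {F ι : Type*} [NormedAddCommGroup F] [NormedSpace ℝ F] {w : ι → F}

theorem exists_mul_norm_lt_apply_of_denseRange (ℓ : StrongDual ℝ F) (hw : DenseRange w)
    {r : ℝ} (hr0 : 0 ≤ r) (hr : r < ‖ℓ‖) : ∃ i, r * ‖w i‖ < ℓ (w i) := by
  obtain ⟨x, hx1, hrx⟩ := ℓ.exists_lt_apply_of_lt_opNorm hr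
  have hlt : ∀ y : F, ‖y‖ < 1 → r < ℓ y → r * ‖y‖ < ℓ y := fun y hy1 hry =>
    (mul_le_of_le_one_right hr0 hy1.le).trans_lt hry
  have hne : {y | r * ‖y‖ < ℓ y}.Nonempty := by
    rcases lt_abs.1 (show r < |ℓ x| from hrx) with h | h
    · exact ⟨x, hlt x hx1 h⟩
    · exact ⟨-x, hlt (-x) (by rwa [norm_neg]) (by rwa [map_neg])⟩
  exact hw.exists_mem_open (isOpen_lt (by fun_prop) ℓ.continuous) hne

theorem norm_eq_iSup_of_denseRange [Nonempty ι] (ℓ : StrongDual ℝ F) (hw : DenseRange w) :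
    ‖ℓ‖ = ⨆ i, |ℓ (w i)| / ‖w i‖ := by
  have hle : ∀ i, |ℓ (w i)| / ‖w i‖ ≤ ‖ℓ‖ := fun i => ℓ.ratio_le_opNorm (w i)
  have hbdd : BddAbove (Set.range fun i => |ℓ (w i)| / ‖w i‖) := ⟨‖ℓ‖, Set.forall_mem_range.2 hle⟩
  refine le_antisymm (le_of_forall_lt fun r hr => ?_) (ciSup_le hle)
  rcases lt_or_ge r 0 with hr0 | hr0
  · obtain ⟨i⟩ := ‹Nonempty ι›
    exact hr0.trans_le ((by positivity : 0 ≤ |ℓ (w i)| / ‖w i‖).trans (le_ciSup hbdd i))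
  obtain ⟨i, hi⟩ := ℓ.exists_mul_norm_lt_apply_of_denseRange hw hr0 hr
  have hwi : 0 < ‖w i‖ := norm_pos_iff.2 fun h => by simp [h] at hi
  exact ((lt_div_iff₀ hwi).2 (hi.trans_le (le_abs_self _))).trans_le (le_ciSup hbdd i)

theorem norm_le_mul_norm_comp {E : Type*} [NormedAddCommGroup E] [NormedSpace ℝ E]
    (ψ : E ≃L[ℝ] F) {C : ℝ} (hC : 0 ≤ C) (hψ : ∀ w, ‖ψ.symm w‖ ≤ C * ‖w‖) (ℓ : StrongDual ℝ F) :
    ‖ℓ‖ ≤ C * ‖ℓ.comp ψ.toContinuousLinearMap‖ := by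
  calc ‖ℓ‖ = ‖(ℓ.comp ψ.toContinuousLinearMap).comp ψ.symm.toContinuousLinearMap‖ := by
        congr 1; ext w; simp
    _ ≤ ‖ℓ.comp ψ.toContinuousLinearMap‖ * C :=
        (opNorm_comp_le _ _).trans <| mul_le_mul_of_nonneg_left (opNorm_le_bound _ hC hψ)
          (norm_nonneg _)
    _ = _ := mul_comm _ _

end ContinuousLinearMap

theorem ContinuousLinearEquiv.denseRange_comp_denseSeq {E F : Type*} [NormedAddCommGroup E]
    [NormedSpace ℝ E] [SeparableSpace E] [NormedAddCommGroup F] [NormedSpace ℝ F] (ψ : E ≃L[ℝ] F) :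
    DenseRange fun n => ψ (denseSeq E n) :=
  ψ.surjective.denseRange.comp (denseRange_denseSeq E) ψ.continuous

theorem Real.HolderConjugate.div_rpow_one_div {p q x : ℝ} (hpq : p.HolderConjugate q)
    (hx : 0 ≤ x) : x / x ^ (1 / p) = x ^ (1 / q) := by
  rcases hx.eq_or_lt with rfl | hx
  · rw [Real.zero_rpow hpq.one_div_ne_zero, Real.zero_rpow hpq.symm.one_div_ne_zero, div_zero]
  · rw [one_div, one_div, ← hpq.one_sub_inv, Real.rpow_sub hx, Real.rpow_one]

theorem le_of_forall_mul_le_of_lt_one {a b : ℝ} (h : ∀ θ ∈ Set.Ioo (0 : ℝ) 1, θ * a ≤ b) :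
    a ≤ b := by
  have hlim : Tendsto (fun θ => θ * a) (𝓝[<] 1) (𝓝 a) := by
    simpa using ((tendsto_id (x := 𝓝 (1 : ℝ))).mul_const a).mono_left nhdsWithin_le_nhds
  exact le_of_tendsto hlim (eventually_of_mem (Ioo_mem_nhdsLT zero_lt_one) h)

theorem StronglyMeasurable.apply_of_continuous_of_measurable {α E β : Type*} [MeasurableSpace α]
    [TopologicalSpace E] [MetrizableSpace E] [SecondCountableTopology E]
    [TopologicalSpace β] [PseudoMetrizableSpace β] {h : α → E → β}
    (hcont : ∀ t, Continuous (h t)) (hmeas : ∀ x, StronglyMeasurable fun t => h t x)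
    {u : α → E} (hu : StronglyMeasurable u) : StronglyMeasurable fun t => h t (u t) := by
  borelize E
  exact (stronglyMeasurable_uncurry_of_continuous_of_stronglyMeasurable (u := fun x t => h t x)
    hcont hmeas).comp_measurable (hu.measurable.prodMk measurable_id)

section ScalarHolder

variable {α : Type*} [MeasurableSpace α] {μ : Measure α}

theorem integrable_rpow_of_le_const_mul {a b : α → ℝ} {C p : ℝ} (hC : 0 ≤ C) (hp : 0 ≤ p)
    (ha : AEMeasurable a μ) (ha0 : ∀ t, 0 ≤ a t) (hb0 : ∀ t, 0 ≤ b t)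
    (hab : ∀ᵐ t ∂μ, a t ≤ C * b t) (hb : Integrable (fun t => b t ^ p) μ) :
    Integrable (fun t => a t ^ p) μ := by
  refine (hb.const_mul (C ^ p)).mono' (ha.pow_const p).aestronglyMeasurable ?_
  filter_upwards [hab] with t ht
  rw [Real.norm_of_nonneg (Real.rpow_nonneg (ha0 t) p), ← Real.mul_rpow hC (hb0 t)]
  exact Real.rpow_le_rpow (ha0 t) ht hp

theorem memLp_ofReal_of_integrable_rpow {a : α → ℝ} {q : ℝ} (hq : 0 < q)
    (ha : AEMeasurable a μ) (ha0 : ∀ t, 0 ≤ a t) (hint : Integrable (fun t => a t ^ q) μ) :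
    MemLp a (ENNReal.ofReal q) μ := by
  refine (integrable_norm_rpow_iff ha.aestronglyMeasurable (by simpa using hq)
    ENNReal.ofReal_ne_top).1 ?_
  simpa only [ENNReal.toReal_ofReal hq.le, Real.norm_of_nonneg (ha0 _)] using hint

theorem integrable_and_abs_integral_le_of_abs_le_mul {p q : ℝ} (hpq : p.HolderConjugate q)
    {a b h : α → ℝ} (ha : AEMeasurable a μ) (hb : AEMeasurable b μ) (ha0 : ∀ t, 0 ≤ a t)
    (hb0 : ∀ t, 0 ≤ b t) (ha_int : Integrable (fun t => a t ^ q) μ)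
    (hb_int : Integrable (fun t => b t ^ p) μ) (hh : AEStronglyMeasurable h μ)
    (hab : ∀ t, |h t| ≤ a t * b t) :
    Integrable h μ ∧
      |∫ t, h t ∂μ| ≤ (∫ t, a t ^ q ∂μ) ^ (1 / q) * (∫ t, b t ^ p ∂μ) ^ (1 / p) := by
  have hma := memLp_ofReal_of_integrable_rpow hpq.symm.pos ha ha0 ha_int
  have hmb := memLp_ofReal_of_integrable_rpow hpq.pos hb hb0 hb_int
  have hab_int : Integrable (fun t => a t * b t) μ :=
    haveI := hpq.symm.ennrealOfReal; hma.integrable_mul hmb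
  have hh_int : Integrable h μ := hab_int.mono' hh (ae_of_all _ hab)
  refine ⟨hh_int, ?_⟩
  calc |∫ t, h t ∂μ| ≤ ∫ t, |h t| ∂μ := abs_integral_le_integral_abs
    _ ≤ ∫ t, a t * b t ∂μ := integral_mono hh_int.abs hab_int hab
    _ ≤ _ := integral_mul_le_Lp_mul_Lq_of_nonneg hpq.symm (ae_of_all _ ha0) (ae_of_all _ hb0)
        hma hmb

theorem exists_holder_extremal {p q : ℝ} (hpq : p.HolderConjugate q) {a : α → ℝ}
    (ha : Measurable a) (ha0 : ∀ t, 0 ≤ a t) (ha_int : Integrable (fun t => a t ^ q) μ) :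
    ∃ c : α → ℝ, Measurable c ∧ (∀ t, 0 ≤ c t) ∧ Integrable (fun t => c t ^ p) μ ∧
      ∫ t, c t ^ p ∂μ ≤ 1 ∧ Integrable (fun t => c t * a t) μ ∧
      ∫ t, c t * a t ∂μ = (∫ t, a t ^ q ∂μ) ^ (1 / q) := by
  set I := ∫ t, a t ^ q ∂μ
  have hI : 0 ≤ I := integral_nonneg fun t => Real.rpow_nonneg (ha0 t) q
  have hcp : ∀ t, (a t ^ (q - 1) / I ^ (1 / p)) ^ p = a t ^ q / I := fun t => by
    rw [Real.div_rpow (Real.rpow_nonneg (ha0 t) _) (Real.rpow_nonneg hI _),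
      ← Real.rpow_mul (ha0 t), ← Real.rpow_mul hI, hpq.symm.sub_one_mul_conj,
      one_div_mul_cancel hpq.ne_zero, Real.rpow_one]
  have hca : ∀ t, a t ^ (q - 1) / I ^ (1 / p) * a t = a t ^ q / I ^ (1 / p) := fun t => by
    rw [div_mul_eq_mul_div, ← Real.rpow_add_one' (ha0 t) (by linarith [hpq.symm.pos]),
      sub_add_cancel]
  refine ⟨fun t => a t ^ (q - 1) / I ^ (1 / p), (ha.pow_const _).div_const _,
    fun t => div_nonneg (Real.rpow_nonneg (ha0 t) _) (Real.rpow_nonneg hI _),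
    (ha_int.div_const I).congr (ae_of_all _ fun t => (hcp t).symm), ?_,
    (ha_int.div_const _).congr (ae_of_all _ fun t => (hca t).symm), ?_⟩
  · simp_rw [hcp, integral_div]
    exact div_self_le_one I
  · simp_rw [hca, integral_div]
    exact hpq.div_rpow_one_div hI

end ScalarHolder

section EvolvingFamily

variable {α : Type*} [MeasurableSpace α] {μ : Measure α}
  {E : Type*} [NormedAddCommGroup E] [NormedSpace ℝ E]
  {X : α → Type*} [∀ t, NormedAddCommGroup (X t)] [∀ t, NormedSpace ℝ (X t)]
  {φ : ∀ t, E ≃L[ℝ] X t}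

theorem exists_measurable_apply_ae_eq {g : ∀ t, StrongDual ℝ (X t)}
    (hg : AEStronglyMeasurable (fun t => (g t).comp (φ t).toContinuousLinearMap) μ) :
    ∃ g' : ∀ t, StrongDual ℝ (X t),
      (∀ v, Measurable fun t => g' t (φ t v)) ∧ ∀ᵐ t ∂μ, g' t = g t := by
  obtain ⟨G, hGm, hG⟩ := hg
  refine ⟨fun t => (G t).comp (φ t).symm.toContinuousLinearMap, fun v => ?_, ?_⟩
  · simpa using
      ((ContinuousLinearMap.apply ℝ ℝ v).continuous.comp_stronglyMeasurable hGm).measurable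
  · filter_upwards [hG] with t ht
    ext w
    simp [← ht]

variable [SeparableSpace E]

theorem measurable_norm_of_measurable_apply (hφ : ∀ v, Measurable fun t => ‖φ t v‖)
    {g : ∀ t, StrongDual ℝ (X t)} (hg : ∀ v, Measurable fun t => g t (φ t v)) :
    Measurable fun t => ‖g t‖ := by
  simp_rw [fun t => (g t).norm_eq_iSup_of_denseRange (φ t).denseRange_comp_denseSeq]
  exact .iSup fun n => (hg _).abs.div (hφ _)

theorem aemeasurable_norm_of_aestronglyMeasurable_comp (hφ : ∀ v, Measurable fun t => ‖φ t v‖)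
    {g : ∀ t, StrongDual ℝ (X t)}
    (hg : AEStronglyMeasurable (fun t => (g t).comp (φ t).toContinuousLinearMap) μ) :
    AEMeasurable (fun t => ‖g t‖) μ := by
  obtain ⟨g', hg', hgg'⟩ := exists_measurable_apply_ae_eq hg
  exact (measurable_norm_of_measurable_apply hφ hg').aemeasurable.congr
    (hgg'.mono fun t ht => by dsimp only; rw [ht])

theorem aemeasurable_norm_of_aestronglyMeasurable_symm (hφ : ∀ v, Measurable fun t => ‖φ t v‖)
    {f : ∀ t, X t} (hf : AEStronglyMeasurable (fun t => (φ t).symm (f t)) μ) :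
    AEMeasurable (fun t => ‖f t‖) μ := by
  have h := StronglyMeasurable.apply_of_continuous_of_measurable (h := fun t v => ‖φ t v‖)
    (fun t => by fun_prop) (fun v => (hφ v).stronglyMeasurable) hf.stronglyMeasurable_mk
  exact h.measurable.aemeasurable.congr (hf.ae_eq_mk.mono fun t ht => by simp [← ht])

theorem exists_stronglyMeasurable_norming (hφ : ∀ v, Measurable fun t => ‖φ t v‖)
    {g : ∀ t, StrongDual ℝ (X t)} (hg : ∀ v, Measurable fun t => g t (φ t v)) {r : α → ℝ}
    (hr : Measurable r) (hr_lt : ∀ t, 0 < r t → r t < ‖g t‖) :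
    ∃ u : α → E, StronglyMeasurable u ∧ ∀ t, ‖φ t (u t)‖ ≤ 1 ∧ r t ≤ g t (φ t (u t)) := by
  classical
  set v := denseSeq E
  -- the alternative `r t ≤ 0` makes the search total, so that `Nat.find` applies at every `t`
  have hex : ∀ t, ∃ n, r t ≤ 0 ∨ r t * ‖φ t (v n)‖ < g t (φ t (v n)) := fun t => by
    rcases le_or_gt (r t) 0 with h | h
    · exact ⟨0, .inl h⟩
    · obtain ⟨n, hn⟩ := (g t).exists_mul_norm_lt_apply_of_denseRange
        (φ t).denseRange_comp_denseSeq h.le (hr_lt t h)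
      exact ⟨n, .inr hn⟩
  set N := fun t => Nat.find (hex t)
  have hN : Measurable N := measurable_find hex fun n =>
    (measurableSet_le hr measurable_const).union (measurableSet_lt (hr.mul (hφ _)) (hg _))
  have hvN : StronglyMeasurable fun t => v (N t) :=
    continuous_of_discreteTopology.comp_stronglyMeasurable hN.stronglyMeasurable
  have hnorm : Measurable fun t => ‖φ t (v (N t))‖ :=
    (StronglyMeasurable.apply_of_continuous_of_measurable (h := fun t x => ‖φ t x‖)
      (fun t => by fun_prop) (fun x => (hφ x).stronglyMeasurable) hvN).measurable
  refine ⟨fun t => if 0 < r t then ‖φ t (v (N t))‖⁻¹ • v (N t) else 0,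
    .ite (measurableSet_lt measurable_const hr) (hnorm.inv.stronglyMeasurable.smul hvN)
      stronglyMeasurable_const, fun t => ?_⟩
  dsimp only
  split_ifs with h
  · have hspec := (Nat.find_spec (hex t)).resolve_left h.not_ge
    have hpos : 0 < ‖φ t (v (N t))‖ := norm_pos_iff.2 fun h0 => by simp [N, h0] at hspec
    simp only [map_smul, norm_smul, norm_inv, norm_norm, smul_eq_mul]
    refine ⟨(inv_mul_cancel₀ hpos.ne').le, ?_⟩
    rw [← div_eq_inv_mul, le_div_iff₀ hpos]
    exact hspec.le
  · simpa using not_lt.1 h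

theorem integrable_norm_rpow_of_integrable_comp {q C : ℝ} (hq : 0 ≤ q) (hC : 0 ≤ C)
    (hφ : ∀ v, Measurable fun t => ‖φ t v‖) (hbwd : ∀ᵐ t ∂μ, ∀ w, ‖(φ t).symm w‖ ≤ C * ‖w‖)
    {g : ∀ t, StrongDual ℝ (X t)}
    (hg : AEStronglyMeasurable (fun t => (g t).comp (φ t).toContinuousLinearMap) μ)
    (hg_int : Integrable (fun t => ‖(g t).comp (φ t).toContinuousLinearMap‖ ^ q) μ) :
    Integrable (fun t => ‖g t‖ ^ q) μ :=
  integrable_rpow_of_le_const_mul hC hq (aemeasurable_norm_of_aestronglyMeasurable_comp hφ hg)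
    (fun _ => norm_nonneg _) (fun _ => norm_nonneg _)
    (hbwd.mono fun t ht => (g t).norm_le_mul_norm_comp (φ t) hC ht) hg_int

theorem integrable_apply_and_abs_integral_le {p q C : ℝ} (hpq : p.HolderConjugate q)
    (hC : 0 ≤ C) (hφ : ∀ v, Measurable fun t => ‖φ t v‖)
    (hfwd : ∀ᵐ t ∂μ, ∀ v, ‖φ t v‖ ≤ C * ‖v‖) {g : ∀ t, StrongDual ℝ (X t)}
    (hg : AEStronglyMeasurable (fun t => (g t).comp (φ t).toContinuousLinearMap) μ)
    (hg_int : Integrable (fun t => ‖g t‖ ^ q) μ) {f : ∀ t, X t}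
    (hf : AEStronglyMeasurable (fun t => (φ t).symm (f t)) μ)
    (hf_int : Integrable (fun t => ‖(φ t).symm (f t)‖ ^ p) μ) :
    Integrable (fun t => g t (f t)) μ ∧
      |∫ t, g t (f t) ∂μ| ≤ (∫ t, ‖g t‖ ^ q ∂μ) ^ (1 / q) * (∫ t, ‖f t‖ ^ p ∂μ) ^ (1 / p) := by
  have hf_meas := aemeasurable_norm_of_aestronglyMeasurable_symm hφ hf
  have hf_int' : Integrable (fun t => ‖f t‖ ^ p) μ :=
    integrable_rpow_of_le_const_mul hC hpq.nonneg hf_meas (fun _ => norm_nonneg _)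
      (fun _ => norm_nonneg _) (hfwd.mono fun t ht => by simpa using ht ((φ t).symm (f t))) hf_int
  have hpair : AEStronglyMeasurable (fun t => g t (f t)) μ := by
    simpa using isBoundedBilinearMap_apply.continuous.comp_aestronglyMeasurable (hg.prodMk hf)
  exact integrable_and_abs_integral_le_of_abs_le_mul hpq
    (aemeasurable_norm_of_aestronglyMeasurable_comp hφ hg) hf_meas (fun _ => norm_nonneg _)
    (fun _ => norm_nonneg _) hg_int hf_int' hpair fun t => (g t).le_opNorm (f t)

theorem exists_le_integral_apply {p q C θ : ℝ} (hpq : p.HolderConjugate q) (hC : 0 ≤ C)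
    (hφ : ∀ v, Measurable fun t => ‖φ t v‖) (hfwd : ∀ᵐ t ∂μ, ∀ v, ‖φ t v‖ ≤ C * ‖v‖)
    (hbwd : ∀ᵐ t ∂μ, ∀ w, ‖(φ t).symm w‖ ≤ C * ‖w‖) {g : ∀ t, StrongDual ℝ (X t)}
    (hg : AEStronglyMeasurable (fun t => (g t).comp (φ t).toContinuousLinearMap) μ)
    (hg_int : Integrable (fun t => ‖g t‖ ^ q) μ) (hθ0 : 0 ≤ θ) (hθ1 : θ < 1) :
    ∃ f : ∀ t, X t, AEStronglyMeasurable (fun t => (φ t).symm (f t)) μ ∧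
      Integrable (fun t => ‖(φ t).symm (f t)‖ ^ p) μ ∧
      (∫ t, ‖f t‖ ^ p ∂μ) ^ (1 / p) ≤ 1 ∧
      θ * (∫ t, ‖g t‖ ^ q ∂μ) ^ (1 / q) ≤ ∫ t, g t (f t) ∂μ := by
  obtain ⟨g', hg', hgg'⟩ := exists_measurable_apply_ae_eq hg
  have hg'_meas := measurable_norm_of_measurable_apply hφ hg'
  have hnorm : (fun t => ‖g' t‖ ^ q) =ᵐ[μ] fun t => ‖g t‖ ^ q :=
    hgg'.mono fun t ht => by simp only [ht]
  obtain ⟨u, hu, hu_norming⟩ := exists_stronglyMeasurable_norming hφ hg' (hg'_meas.const_mul θ)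
    fun t ht => mul_lt_of_lt_one_left (pos_of_mul_pos_right ht hθ0) hθ1
  obtain ⟨c, hc, hc0, hcp_int, hcp, hca_int, hca⟩ :=
    exists_holder_extremal hpq hg'_meas (fun t => norm_nonneg _) (hg_int.congr hnorm.symm)
  set f : ∀ t, X t := fun t => φ t (c t • u t)
  have hfc : ∀ t, ‖f t‖ ≤ c t := fun t => by
    simpa [f, norm_smul, Real.norm_of_nonneg (hc0 t)] using
      mul_le_of_le_one_right (hc0 t) (hu_norming t).1
  have hf : AEStronglyMeasurable (fun t => (φ t).symm (f t)) μ := by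
    simp only [f, ContinuousLinearEquiv.symm_apply_apply]
    exact (hc.stronglyMeasurable.smul hu).aestronglyMeasurable
  have hf_int : Integrable (fun t => ‖(φ t).symm (f t)‖ ^ p) μ :=
    integrable_rpow_of_le_const_mul hC hpq.nonneg hf.norm.aemeasurable (fun _ => norm_nonneg _)
      hc0 (hbwd.mono fun t ht => (ht (f t)).trans (mul_le_mul_of_nonneg_left (hfc t) hC)) hcp_int
  have hf_le : ∫ t, ‖f t‖ ^ p ∂μ ≤ 1 :=
    (integral_mono_of_nonneg (ae_of_all _ fun _ => by positivity) hcp_int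
      (ae_of_all _ fun t => Real.rpow_le_rpow (norm_nonneg _) (hfc t) hpq.nonneg)).trans hcp
  have hpair := (integrable_apply_and_abs_integral_le hpq hC hφ hfwd hg hg_int hf hf_int).1
  have hpair' : (fun t => g t (f t)) =ᵐ[μ] fun t => g' t (f t) :=
    hgg'.mono fun t ht => by simp only [ht]
  refine ⟨f, hf, hf_int, Real.rpow_le_one (integral_nonneg fun _ => by positivity) hf_le
    hpq.one_div_nonneg, ?_⟩
  calc θ * (∫ t, ‖g t‖ ^ q ∂μ) ^ (1 / q) = ∫ t, θ * (c t * ‖g' t‖) ∂μ := by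
        rw [integral_const_mul, hca, integral_congr_ae hnorm]
    _ ≤ ∫ t, g' t (f t) ∂μ := by
        refine integral_mono (hca_int.const_mul θ) (hpair.congr hpair') fun t => ?_
        calc θ * (c t * ‖g' t‖) = c t * (θ * ‖g' t‖) := mul_left_comm _ _ _
          _ ≤ c t * g' t (φ t (u t)) := mul_le_mul_of_nonneg_left (hu_norming t).2 (hc0 t)
          _ = g' t (f t) := by simp [f]
    _ = ∫ t, g t (f t) ∂μ := (integral_congr_ae hpair').symm

end EvolvingFamily

theorem dual_functional_norm_general
    (T : ℝ) (p q : ℝ) (hp : 1 < p) (hpq : 1 / p + 1 / q = 1)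
    (X : ℝ → Type*) [∀ t, NormedAddCommGroup (X t)] [∀ t, NormedSpace ℝ (X t)]
    [TopologicalSpace.SeparableSpace (X 0)]
    (φ : ∀ t : ℝ, X 0 ≃L[ℝ] X t)
    (C : ℝ) (hC : 1 ≤ C)
    (hfwd : ∀ t ∈ Set.Icc (0:ℝ) T, ∀ v : X 0, ‖φ t v‖ ≤ C * ‖v‖)
    (hbwd : ∀ t ∈ Set.Icc (0:ℝ) T, ∀ w : X t, ‖(φ t).symm w‖ ≤ C * ‖w‖)
    (hmeas : ∀ v : X 0, Measurable fun t => ‖φ t v‖)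
    (g : ∀ t : ℝ, StrongDual ℝ (X t))
    (hg1 : AEStronglyMeasurable (fun t => (g t).comp (φ t).toContinuousLinearMap)
      (volume.restrict (Set.Ioc 0 T)))
    (hg2 : IntegrableOn (fun t => ‖(g t).comp (φ t).toContinuousLinearMap‖ ^ q)
      (Set.Ioc 0 T)) :
    -- (i) Hölder's inequality for the duality pairing:
    (∀ f : ∀ t : ℝ, X t,
      AEStronglyMeasurable (fun t => (φ t).symm (f t)) (volume.restrict (Set.Ioc 0 T)) →
      IntegrableOn (fun t => ‖(φ t).symm (f t)‖ ^ p) (Set.Ioc 0 T) →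
      |∫ t in Set.Ioc 0 T, g t (f t)| ≤
        (∫ t in Set.Ioc 0 T, ‖g t‖ ^ q) ^ (1 / q) *
          (∫ t in Set.Ioc 0 T, ‖f t‖ ^ p) ^ (1 / p)) ∧
    -- (ii) the norm of the induced functional is attained:
    IsLUB {r : ℝ | ∃ f : ∀ t : ℝ, X t,
        AEStronglyMeasurable (fun t => (φ t).symm (f t)) (volume.restrict (Set.Ioc 0 T)) ∧
        IntegrableOn (fun t => ‖(φ t).symm (f t)‖ ^ p) (Set.Ioc 0 T) ∧
        (∫ t in Set.Ioc 0 T, ‖f t‖ ^ p) ^ (1 / p) ≤ 1 ∧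
        r = ∫ t in Set.Ioc 0 T, g t (f t)}
      ((∫ t in Set.Ioc 0 T, ‖g t‖ ^ q) ^ (1 / q)) := by
  have hpq : p.HolderConjugate q :=
    Real.holderConjugate_iff.2 ⟨hp, by simpa only [one_div] using hpq⟩
  have hC0 : 0 ≤ C := zero_le_one.trans hC
  have hIcc : ∀ᵐ t ∂volume.restrict (Set.Ioc 0 T), t ∈ Set.Icc 0 T :=
    (ae_restrict_mem measurableSet_Ioc).mono fun t ht => Set.Ioc_subset_Icc_self ht
  have hfwd' := hIcc.mono hfwd
  have hbwd' := hIcc.mono hbwd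
  have hg_int := integrable_norm_rpow_of_integrable_comp hpq.symm.nonneg hC0 hmeas hbwd' hg1 hg2
  have holder := fun f hf hf_int =>
    (integrable_apply_and_abs_integral_le hpq hC0 hmeas hfwd' hg1 hg_int (f := f) hf hf_int).2
  refine ⟨holder, ?_, fun b hb => ?_⟩
  · rintro _ ⟨f, hf, hf_int, hf1, rfl⟩
    calc ∫ t in Set.Ioc 0 T, g t (f t) ≤ |∫ t in Set.Ioc 0 T, g t (f t)| := le_abs_self _
      _ ≤ _ := holder f hf hf_int
      _ ≤ _ := mul_le_of_le_one_right (by positivity) hf1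
  · refine le_of_forall_mul_le_of_lt_one fun θ hθ => ?_
    obtain ⟨f, hf, hf_int, hf1, hθf⟩ :=
      exists_le_integral_apply hpq hC0 hmeas hfwd' hbwd' hg1 hg_int hθ.1.le hθ.2
    exact hθf.trans (hb ⟨f, hf, hf_int, hf1, rfl⟩)

/-- Each `g ∈ L^q_{X^*}` defines, via the duality pairing, a bounded linear
functional on `L^p_X` whose norm equals `‖g‖_{L^q_{X^*}}` (Lemma 2.8): Hölder's
inequality holds, and the supremum of the pairing over the unit ball of `L^p_X`
equals `(∫₀^T ‖g(t)‖_{X(t)^*}^q dt)^{1/q}`. -/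
theorem dual_functional_norm
    (T : ℝ) (hT : 0 < T) (p q : ℝ) (hp : 1 < p) (hpq : 1 / p + 1 / q = 1)
    (X : ℝ → Type*) [∀ t, NormedAddCommGroup (X t)] [∀ t, NormedSpace ℝ (X t)]
    [∀ t, CompleteSpace (X t)]
    [TopologicalSpace.SeparableSpace (X 0)]
    (hrefl : ∀ t : ℝ, Function.Surjective (NormedSpace.inclusionInDoubleDual ℝ (X t)))
    (φ : ∀ t : ℝ, X 0 ≃L[ℝ] X t)
    (hφ0 : φ 0 = ContinuousLinearEquiv.refl ℝ (X 0))
    (C : ℝ) (hC : 1 ≤ C)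
    (hfwd : ∀ t ∈ Set.Icc (0:ℝ) T, ∀ v : X 0, ‖φ t v‖ ≤ C * ‖v‖)
    (hbwd : ∀ t ∈ Set.Icc (0:ℝ) T, ∀ w : X t, ‖(φ t).symm w‖ ≤ C * ‖w‖)
    (hmeas : ∀ v : X 0, Measurable fun t => ‖φ t v‖)
    (g : ∀ t : ℝ, StrongDual ℝ (X t))
    (hg1 : AEStronglyMeasurable (fun t => (g t).comp (φ t).toContinuousLinearMap)
      (volume.restrict (Set.Ioc 0 T)))
    (hg2 : IntegrableOn (fun t => ‖(g t).comp (φ t).toContinuousLinearMap‖ ^ q)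
      (Set.Ioc 0 T)) :
    -- (i) Hölder's inequality for the duality pairing:
    (∀ f : ∀ t : ℝ, X t,
      AEStronglyMeasurable (fun t => (φ t).symm (f t)) (volume.restrict (Set.Ioc 0 T)) →
      IntegrableOn (fun t => ‖(φ t).symm (f t)‖ ^ p) (Set.Ioc 0 T) →
      |∫ t in Set.Ioc 0 T, g t (f t)| ≤
        (∫ t in Set.Ioc 0 T, ‖g t‖ ^ q) ^ (1 / q) *
          (∫ t in Set.Ioc 0 T, ‖f t‖ ^ p) ^ (1 / p)) ∧
    -- (ii) the norm of the induced functional is attained: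
    IsLUB {r : ℝ | ∃ f : ∀ t : ℝ, X t,
        AEStronglyMeasurable (fun t => (φ t).symm (f t)) (volume.restrict (Set.Ioc 0 T)) ∧
        IntegrableOn (fun t => ‖(φ t).symm (f t)‖ ^ p) (Set.Ioc 0 T) ∧
        (∫ t in Set.Ioc 0 T, ‖f t‖ ^ p) ^ (1 / p) ≤ 1 ∧
        r = ∫ t in Set.Ioc 0 T, g t (f t)}
      ((∫ t in Set.Ioc 0 T, ‖g t‖ ^ q) ^ (1 / q)) :=
  dual_functional_norm_general T p q hp hpq X φ C hC hfwd hbwd hmeas g hg1 hg2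
end

section
/- Minty identification: let (Ω, μ) be a σ-finite measure space and define U : ℝ → ℝ by U(r) = r for r ≤ 0, U(r) = 0 for 0 ≤ r ≤ 1, and U(r) = r − 1 for r ≥ 1 (so that U = E^{-1} for the Stefan energy graph E). Suppose χ, u ∈ L²(μ) satisfy ∫_Ω (χ − w)(u − U∘w) dμ ≥ 0 for every w ∈ L²(μ). Then u = U∘χ almost everywhere on Ω. -/
/-!
Testing the inequality with `w = χ + t v`, where `v = u - U ∘ χ`, and using the Lipschitz
bound `|U w - U χ| ≤ K t |v|` gives `0 ≤ ∫ (χ - w)(u - U w) ≤ -t (1 - K t) ∫ v²`, so `v = 0` a.e. as soon as `K t < 1`.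
-/

open MeasureTheory

/-- The inverse `U = E⁻¹` of the Stefan energy graph `E`. -/
noncomputable def stefanInverse (r : ℝ) : ℝ :=
  if r ≤ 0 then r else if r ≤ 1 then 0 else r - 1

lemma stefanInverse_zero : stefanInverse 0 = 0 := by
  simp [stefanInverse]

lemma lipschitzWith_one_stefanInverse : LipschitzWith 1 stefanInverse := by
  refine LipschitzWith.of_dist_le_mul fun a b => ?_
  simp only [Real.dist_eq, NNReal.coe_one, one_mul, stefanInverse, abs_le]
  have h₁ := le_abs_self (a - b)
  have h₂ := neg_abs_le (a - b)
  split_ifs <;> constructor <;> linarith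

lemma neg_mul_sub_le_of_abs_le {a d t K : ℝ} (ht : 0 ≤ t) (hd : |d| ≤ K * (t * |a|)) :
    -(t * a) * (a - d) ≤ -(t * (1 - K * t)) * a ^ 2 := by
  have had : a * d ≤ |a| * |d| := by rw [← abs_mul]; exact le_abs_self _
  have hK : |a| * |d| ≤ K * t * a ^ 2 := by
    rw [← sq_abs a]; nlinarith [abs_nonneg a]
  nlinarith [mul_le_mul_of_nonneg_left (had.trans hK) ht]

lemma ae_eq_zero_of_integral_sq_nonpos {Ω : Type*} [MeasurableSpace Ω] {μ : Measure Ω}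
    {v : Ω → ℝ} (hv : MemLp v 2 μ) (h : ∫ x, v x ^ 2 ∂μ ≤ 0) : v =ᵐ[μ] 0 := by
  have hsq : (fun x => v x ^ 2) =ᵐ[μ] 0 :=
    (integral_eq_zero_iff_of_nonneg (fun x => sq_nonneg (v x)) hv.integrable_sq).1
      (le_antisymm h (integral_nonneg fun x => sq_nonneg _))
  filter_upwards [hsq] with x hx
  exact pow_eq_zero_iff two_ne_zero |>.1 hx

theorem ae_eq_comp_of_forall_integral_mul_sub_nonneg {Ω : Type*} [MeasurableSpace Ω]
    {μ : Measure Ω} {U : ℝ → ℝ} {K : NNReal} (hU : LipschitzWith K U) (hU0 : U 0 = 0)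
    {χ u : Ω → ℝ} (hχ : MemLp χ 2 μ) (hu : MemLp u 2 μ)
    (h : ∀ w : Ω → ℝ, MemLp w 2 μ → 0 ≤ ∫ x, (χ x - w x) * (u x - U (w x)) ∂μ) :
    u =ᵐ[μ] fun x => U (χ x) := by
  have hUL2 {f : Ω → ℝ} (hf : MemLp f 2 μ) : MemLp (fun x => U (f x)) 2 μ :=
    hU.comp_memLp hU0 hf
  set v : Ω → ℝ := fun x => u x - U (χ x)
  have hv : MemLp v 2 μ := hu.sub (hUL2 hχ)
  set t : ℝ := ((K : ℝ) + 1)⁻¹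
  have ht : 0 < t := by positivity
  have hc : 0 < t * (1 - K * t) := by
    refine mul_pos ht (sub_pos.2 ?_)
    rw [← div_eq_mul_inv, div_lt_one (by positivity)]
    linarith
  set w : Ω → ℝ := fun x => χ x + t * v x
  have hw : MemLp w 2 μ := hχ.add (hv.const_mul t)
  have hpointwise (x : Ω) :
      (χ x - w x) * (u x - U (w x)) ≤ -(t * (1 - K * t)) * v x ^ 2 := by
    have hlip : |U (w x) - U (χ x)| ≤ K * (t * |v x|) := by
      simpa [w, abs_mul, abs_of_pos ht, ← Real.dist_eq] using hU.dist_le_mul (w x) (χ x)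
    have := neg_mul_sub_le_of_abs_le ht.le hlip
    convert this using 2 <;> simp only [w, v] <;> ring
  have hbound : ∫ x, (χ x - w x) * (u x - U (w x)) ∂μ ≤
      -(t * (1 - K * t)) * ∫ x, v x ^ 2 ∂μ := by
    rw [← integral_const_mul]
    exact integral_mono ((hχ.sub hw).integrable_mul (hu.sub (hUL2 hw)))
      (hv.integrable_sq.const_mul _) hpointwise
  have hv0 : v =ᵐ[μ] 0 :=
    ae_eq_zero_of_integral_sq_nonpos hv (by nlinarith [h w hw])
  filter_upwards [hv0] with x hx
  exact sub_eq_zero.1 hx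

theorem minty_identification_general
    {Ω : Type*} [MeasurableSpace Ω] (μ : Measure Ω)
    (U : ℝ → ℝ)
    (hU : ∀ r : ℝ, U r = if r ≤ 0 then r else if r ≤ 1 then 0 else r - 1)
    (χ u : Ω → ℝ) (hχ : MemLp χ 2 μ) (hu : MemLp u 2 μ)
    (h : ∀ w : Ω → ℝ, MemLp w 2 μ →
      0 ≤ ∫ x, (χ x - w x) * (u x - U (w x)) ∂μ) :
    u =ᵐ[μ] fun x => U (χ x) := by
  obtain rfl : U = stefanInverse := funext hU
  exact ae_eq_comp_of_forall_integral_mul_sub_nonneg lipschitzWith_one_stefanInverse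
    stefanInverse_zero hχ hu h

/-- Minty identification for the Stefan nonlinearity: if `χ, u ∈ L²(μ)` satisfy
`∫ (χ − w)(u − U∘w) dμ ≥ 0` for every `w ∈ L²(μ)`, where `U = E⁻¹` is the
inverse of the Stefan energy graph, then `u = U∘χ` a.e. -/
theorem minty_identification
    {Ω : Type*} [MeasurableSpace Ω] (μ : Measure Ω) [SigmaFinite μ]
    (U : ℝ → ℝ)
    (hU : ∀ r : ℝ, U r = if r ≤ 0 then r else if r ≤ 1 then 0 else r - 1)
    (χ u : Ω → ℝ) (hχ : MemLp χ 2 μ) (hu : MemLp u 2 μ)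
    (h : ∀ w : Ω → ℝ, MemLp w 2 μ →
      0 ≤ ∫ x, (χ x - w x) * (u x - U (w x)) ∂μ) :
    u =ᵐ[μ] fun x => U (χ x) :=
  minty_identification_general μ U hU χ u hχ hu h
end

section
/- Let (Ω, μ) be a finite measure space, let U : ℝ → ℝ be nondecreasing, and let δ > 0 and σ > 0 be such that for all y, z ∈ ℝ, |y − z| < σ implies |U(y) − U(z)| ≤ δ. Let A, B : Ω → ℝ be measurable functions such that U∘A and U∘B are integrable and (A − B)(U∘A − U∘B) is integrable. Then ∫_Ω |U∘A − U∘B| dμ ≤ (1/σ) ∫_Ω (A − B)(U∘A − U∘B) dμ + δ·μ(Ω). -/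
open MeasureTheory

section MonotoneProduct

variable {𝕜 : Type*} [Field 𝕜] [LinearOrder 𝕜] [IsStrictOrderedRing 𝕜] {U : 𝕜 → 𝕜}

theorem Monotone.sub_mul_sub_apply_eq_abs_mul_abs (hU : Monotone U) (a b : 𝕜) :
    (a - b) * (U a - U b) = |a - b| * |U a - U b| := by
  rw [← abs_mul]
  exact (abs_of_nonneg ((monotone_id.monovary hU).sub_mul_sub_nonneg b a)).symm

/-- If `|a - b| ≥ σ` the product dominates `σ * |U a - U b|`; otherwise `|U a - U b| ≤ δ` and
the nonnegative product is dropped. -/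
theorem Monotone.abs_sub_apply_le {σ δ : 𝕜} (hU : Monotone U) (hσ : 0 < σ)
    (huc : ∀ y z : 𝕜, |y - z| < σ → |U y - U z| ≤ δ) (a b : 𝕜) :
    |U a - U b| ≤ 1 / σ * ((a - b) * (U a - U b)) + δ := by
  rw [hU.sub_mul_sub_apply_eq_abs_mul_abs, one_div_mul_eq_div]
  by_cases hclose : |a - b| < σ
  · have hsmall := huc a b hclose
    have hprod : 0 ≤ |a - b| * |U a - U b| / σ := by positivity
    linarith
  · have hfar : σ * |U a - U b| ≤ |a - b| * |U a - U b| :=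
      mul_le_mul_of_nonneg_right (not_lt.mp hclose) (abs_nonneg _)
    have hdominated : |U a - U b| ≤ |a - b| * |U a - U b| / σ := by
      rw [le_div_iff₀ hσ]; linarith
    have hδ : 0 ≤ δ := by simpa using huc a a (by simpa using hσ)
    linarith

end MonotoneProduct

theorem monotone_translation_estimate_general
    {Ω : Type*} [MeasurableSpace Ω] (μ : Measure Ω) [IsFiniteMeasure μ]
    (U : ℝ → ℝ) (hU : Monotone U)
    (δ σ : ℝ) (hσ : 0 < σ)
    (huc : ∀ y z : ℝ, |y - z| < σ → |U y - U z| ≤ δ)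
    (A B : Ω → ℝ)
    (hprod : Integrable (fun x => (A x - B x) * (U (A x) - U (B x))) μ) :
    ∫ x, |U (A x) - U (B x)| ∂μ ≤
      (1 / σ) * ∫ x, (A x - B x) * (U (A x) - U (B x)) ∂μ +
        δ * (μ Set.univ).toReal := by
  have hbound : Integrable (fun x => 1 / σ * ((A x - B x) * (U (A x) - U (B x))) + δ) μ :=
    (hprod.const_mul _).add (integrable_const δ)
  calc ∫ x, |U (A x) - U (B x)| ∂μ
      ≤ ∫ x, (1 / σ * ((A x - B x) * (U (A x) - U (B x))) + δ) ∂μ :=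
        integral_mono_of_nonneg (ae_of_all _ fun _ => abs_nonneg _) hbound
          (ae_of_all _ fun x => hU.abs_sub_apply_le hσ huc (A x) (B x))
    _ = (1 / σ) * ∫ x, (A x - B x) * (U (A x) - U (B x)) ∂μ + δ * (μ Set.univ).toReal := by
        rw [integral_add (hprod.const_mul _) (integrable_const δ), integral_const_mul,
          integral_const, smul_eq_mul, measureReal_def, mul_comm δ]

/-- Abstract key step of the uniform time-translation estimate: for a
nondecreasing `U` such that `|y − z| < σ` implies `|U y − U z| ≤ δ`, the
`L¹`-distance of `U∘A` and `U∘B` is controlled by the monotone product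
`(A − B)(U∘A − U∘B)` up to the error `δ·μ(Ω)`. -/
theorem monotone_translation_estimate
    {Ω : Type*} [MeasurableSpace Ω] (μ : Measure Ω) [IsFiniteMeasure μ]
    (U : ℝ → ℝ) (hU : Monotone U)
    (δ σ : ℝ) (hδ : 0 < δ) (hσ : 0 < σ)
    (huc : ∀ y z : ℝ, |y - z| < σ → |U y - U z| ≤ δ)
    (A B : Ω → ℝ) (hA : Measurable A) (hB : Measurable B)
    (hUA : Integrable (fun x => U (A x)) μ)
    (hUB : Integrable (fun x => U (B x)) μ)
    (hprod : Integrable (fun x => (A x - B x) * (U (A x) - U (B x))) μ) :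
    ∫ x, |U (A x) - U (B x)| ∂μ ≤
      (1 / σ) * ∫ x, (A x - B x) * (U (A x) - U (B x)) ∂μ +
        δ * (μ Set.univ).toReal :=
  monotone_translation_estimate_general μ U hU δ σ hσ huc A B hprod
end
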